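/- Fix q with 0 < q < 1 and let λ₀, s₀ be real-valued functions on ℝ∖{0}. Suppose y : ℝ → ℝ satisfies (D_q²y)(x) = λ₀(x)(D_qy)(x) + s₀(x)y(x) for all x ≠ 0. Then for every n ≥ 1 and all x ≠ 0, λ_{n−1}(x)(D_q^{n+2}y)(x) − λ_n(x)(D_q^{n+1}y)(x) = (λ_{n−1}(x)s_n(x) − λ_n(x)s_{n−1}(x))·y(x). In particular, if the terminating condition s_n(x)λ_{n−1}(x) = s_{n−1}(x)λ_n(x) holds for all x ≠ 0, then λ_{n−1}(x)·D_q(D_q^{n+1}y)(x) = λ_n(x)·(D_q^{n+1}y)(x) for all x ≠ 0. -/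

import Mathlib

/-- The `q`-difference operator: `(D_q f)(x) = (f(x) - f(qx)) / ((1-q)x)`. -/
noncomputable def Dq (q : ℝ) (f : ℝ → ℝ) : ℝ → ℝ :=
  fun x => (f x - f (q * x)) / ((1 - q) * x)

/-- The q-AIM sequences `(λ_n, s_n)` built from `(λ₀, s₀)`. -/
noncomputable def qdaim (q : ℝ) (l0 s0 : ℝ → ℝ) : ℕ → (ℝ → ℝ) × (ℝ → ℝ)
  | 0 => (l0, s0)
  | n + 1 =>
      (fun x => Dq q (qdaim q l0 s0 n).1 x + (qdaim q l0 s0 n).1 (q * x) * l0 x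
          + (qdaim q l0 s0 n).2 (q * x),
       fun x => Dq q (qdaim q l0 s0 n).2 x + (qdaim q l0 s0 n).1 (q * x) * s0 x)


/-!
Induction on `n` with the `q`-Leibniz rule `D_q(fg)(x) = D_q f(x) g(x) + f(qx) D_q g(x)` shows
`D_q^{n+2} y = λ_n D_q y + s_n y` on `ℝ ∖ {0}`; the q-AIM recursions are exactly the coefficients
this produces. Eliminating `D_q y` between the cases `n - 1` and `n` gives the identity.
-/

theorem Dq_add (q : ℝ) (f g : ℝ → ℝ) (x : ℝ) :
    Dq q (f + g) x = Dq q f x + Dq q g x := by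
  simp only [Dq, Pi.add_apply]
  ring

theorem Dq_mul (q : ℝ) (f g : ℝ → ℝ) (x : ℝ) :
    Dq q (f * g) x = Dq q f x * g x + f (q * x) * Dq q g x := by
  simp only [Dq, Pi.mul_apply]
  ring

theorem Dq_congr {q : ℝ} {f g : ℝ → ℝ} {x : ℝ} (hx : f x = g x) (hqx : f (q * x) = g (q * x)) :
    Dq q f x = Dq q g x := by
  simp only [Dq, hx, hqx]

theorem iterate_Dq_add_two_eq {q : ℝ} (hq : q ≠ 0) {l0 s0 y : ℝ → ℝ}
    (hy : ∀ x : ℝ, x ≠ 0 → (Dq q)^[2] y x = l0 x * Dq q y x + s0 x * y x) (n : ℕ) {x : ℝ}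
    (hx : x ≠ 0) :
    (Dq q)^[n + 2] y x = (qdaim q l0 s0 n).1 x * Dq q y x + (qdaim q l0 s0 n).2 x * y x := by
  induction n generalizing x with
  | zero => exact hy x hx
  | succ n ih =>
    set l := (qdaim q l0 s0 n).1
    set s := (qdaim q l0 s0 n).2
    have h_step : (Dq q)^[n + 3] y x = Dq q (l * Dq q y + s * y) x := by
      rw [Function.iterate_succ_apply']
      exact Dq_congr (ih hx) (ih (mul_ne_zero hq hx))
    have h_two : Dq q (Dq q y) x = l0 x * Dq q y x + s0 x * y x := hy x hx
    rw [h_step, Dq_add, Dq_mul, Dq_mul, h_two]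
    simp only [qdaim]
    ring

theorem qdaim_fst_mul_iterate_Dq_sub {q : ℝ} (hq : q ≠ 0) {l0 s0 y : ℝ → ℝ}
    (hy : ∀ x : ℝ, x ≠ 0 → (Dq q)^[2] y x = l0 x * Dq q y x + s0 x * y x) (n : ℕ) {x : ℝ}
    (hx : x ≠ 0) :
    (qdaim q l0 s0 n).1 x * (Dq q)^[n + 3] y x
        - (qdaim q l0 s0 (n + 1)).1 x * (Dq q)^[n + 2] y x
      = ((qdaim q l0 s0 n).1 x * (qdaim q l0 s0 (n + 1)).2 x
          - (qdaim q l0 s0 (n + 1)).1 x * (qdaim q l0 s0 n).2 x) * y x := by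
  rw [iterate_Dq_add_two_eq hq hy (n + 1) hx, iterate_Dq_add_two_eq hq hy n hx]
  ring

theorem stmt_15_general (q : ℝ) (hq0 : 0 < q) (l0 s0 : ℝ → ℝ) (y : ℝ → ℝ)
    (hy : ∀ x : ℝ, x ≠ 0 → (Dq q)^[2] y x = l0 x * Dq q y x + s0 x * y x)
    (n : ℕ) (hn : 1 ≤ n) :
    (∀ x : ℝ, x ≠ 0 →
        (qdaim q l0 s0 (n - 1)).1 x * (Dq q)^[n + 2] y x
            - (qdaim q l0 s0 n).1 x * (Dq q)^[n + 1] y x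
          = ((qdaim q l0 s0 (n - 1)).1 x * (qdaim q l0 s0 n).2 x
              - (qdaim q l0 s0 n).1 x * (qdaim q l0 s0 (n - 1)).2 x) * y x) ∧
      ((∀ x : ℝ, x ≠ 0 →
          (qdaim q l0 s0 n).2 x * (qdaim q l0 s0 (n - 1)).1 x
            = (qdaim q l0 s0 (n - 1)).2 x * (qdaim q l0 s0 n).1 x) →
        ∀ x : ℝ, x ≠ 0 →
          (qdaim q l0 s0 (n - 1)).1 x * Dq q ((Dq q)^[n + 1] y) x
            = (qdaim q l0 s0 n).1 x * (Dq q)^[n + 1] y x) := by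
  obtain ⟨m, rfl⟩ := Nat.exists_eq_add_of_le' hn
  simp only [Nat.add_sub_cancel]
  have h_main := fun x (hx : x ≠ 0) => qdaim_fst_mul_iterate_Dq_sub hq0.ne' hy m hx
  refine ⟨h_main, fun h_term x hx => ?_⟩
  rw [← Function.iterate_succ_apply' (Dq q)]
  linear_combination h_main x hx + y x * h_term x hx

theorem stmt_15 (q : ℝ) (hq0 : 0 < q) (hq1 : q < 1) (l0 s0 : ℝ → ℝ) (y : ℝ → ℝ)
    (hy : ∀ x : ℝ, x ≠ 0 → (Dq q)^[2] y x = l0 x * Dq q y x + s0 x * y x)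
    (n : ℕ) (hn : 1 ≤ n) :
    (∀ x : ℝ, x ≠ 0 →
        (qdaim q l0 s0 (n - 1)).1 x * (Dq q)^[n + 2] y x
            - (qdaim q l0 s0 n).1 x * (Dq q)^[n + 1] y x
          = ((qdaim q l0 s0 (n - 1)).1 x * (qdaim q l0 s0 n).2 x
              - (qdaim q l0 s0 n).1 x * (qdaim q l0 s0 (n - 1)).2 x) * y x) ∧
      ((∀ x : ℝ, x ≠ 0 →
          (qdaim q l0 s0 n).2 x * (qdaim q l0 s0 (n - 1)).1 x
            = (qdaim q l0 s0 (n - 1)).2 x * (qdaim q l0 s0 n).1 x) →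
        ∀ x : ℝ, x ≠ 0 →
          (qdaim q l0 s0 (n - 1)).1 x * Dq q ((Dq q)^[n + 1] y) x
            = (qdaim q l0 s0 n).1 x * (Dq q)^[n + 1] y x) :=
  stmt_15_general q hq0 l0 s0 y hy n hn
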